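/- Let \(A = \{a_0, \dots, a_{k-1}\}\) and \(B = \{b_0, \dots, b_{k-1}\}\) be disjoint \(k\)-element sets and let \(\mathcal{H}(A,B)\) consist of all triples \(\{a_i, a_j, b_{i+j}\}\) and \(\{a_i, a_j, b_{i+j+1}\}\) (indices mod \(k\), \(i \ne j\)). If \(X \subseteq A \cup B\) satisfies \(A \cap X \neq \emptyset\), \(A \setminus X \neq \emptyset\), and \(B \cap X = \emptyset\), then the graph \(G_{\mathcal{H}(A,B)}(X)\) is connected. -/

import Mathlib

/-- The graph `G_E(X)`: edges are pairs `{y, z}` such that `{x, y, z} ∈ E` for some `x ∈ X`. -/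
def blockGraphS {α : Type*} [DecidableEq α] (E : Set (Finset α)) (X : Set α) :
    SimpleGraph α where
  Adj y z := y ≠ z ∧ ∃ x ∈ X, ({x, y, z} : Finset α) ∈ E
  symm := by
    constructor
    rintro y z ⟨hyz, x, hx, he⟩
    refine ⟨hyz.symm, x, hx, ?_⟩
    have : ({x, z, y} : Finset α) = {x, y, z} := by ext t; simp; tauto
    rwa [this]
  loopless := ⟨fun y h => h.1 rfl⟩

/-- The hypergraph `H(A,B)`: all triples `{a_i, a_j, b_{i+j}}` and `{a_i, a_j, b_{i+j+1}}`
with indices taken modulo `k` and `i ≠ j`. -/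
def HAB {α : Type*} [DecidableEq α] (k : ℕ) (a b : ZMod k → α) : Set (Finset α) :=
  { e | ∃ i j : ZMod k, i ≠ j ∧
      (e = ({a i, a j, b (i + j)} : Finset α) ∨
       e = ({a i, a j, b (i + j + 1)} : Finset α)) }

/-!
With `S = {i | a i ∈ X}`, each vertex `a j` with `j ∉ S` is adjacent to `b (i + j)` and
`b (i + j + 1)` for every `i ∈ S`. So it suffices that the relation "same component" on the
indices of `B` is total. It identifies `S + j` with `S + j + 1` for every `j ∉ S`, hence `m` with
`m + 1` unless `m - S ⊆ S`. Two such exceptional points `y, y'` differ by a period of `S`, while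
`y - 1` is never exceptional (else `S + 1 ⊆ S`, so `S` is empty or everything); translating
`y - 1 ∈ S + j` by that period relates `y - 1` to `y' - 1`, hence `y` to `y'`. A walk
`m, m + 1, …` reaches any target unless it stops at an exceptional point, and all of those are
related.
-/

open Set

section TranslateRelation

theorem add_sub_mem_of_mapsTo_sub {G : Type*} [AddCommGroup G] {S : Set G} {m m' i : G}
    (hm : MapsTo (m - ·) S S) (hm' : MapsTo (m' - ·) S S) (hi : i ∈ S) : i + (m' - m) ∈ S := by
  rw [show i + (m' - m) = m' - (m - i) by abel]
  exact hm' (hm hi)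

variable {G : Type*} [AddCommGroupWithOne G] {S : Set G} {R : G → G → Prop}

theorem rel_add_one_of_not_mapsTo_sub (hsucc : ∀ i ∈ S, ∀ j ∉ S, R (i + j) (i + j + 1))
    {m : G} (hm : ¬MapsTo (m - ·) S S) : R m (m + 1) := by
  obtain ⟨i, hi, hmi⟩ : ∃ i ∈ S, m - i ∉ S := by simpa [MapsTo] using hm
  simpa using hsucc i hi (m - i) hmi

theorem rel_add_natCast_or_exists_mapsTo_sub (hR : Equivalence R)
    (hsucc : ∀ i ∈ S, ∀ j ∉ S, R (i + j) (i + j + 1)) (x : G) (n : ℕ) :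
    R x (x + n) ∨ ∃ y, MapsTo (y - ·) S S ∧ R x y := by
  induction n with
  | zero => simpa using Or.inl (hR.refl x)
  | succ n ih =>
    rcases ih with h | h
    · by_cases hy : MapsTo (x + n - ·) S S
      · exact Or.inr ⟨_, hy, h⟩
      · rw [Nat.cast_succ, ← add_assoc]
        exact Or.inl (hR.trans h (rel_add_one_of_not_mapsTo_sub hsucc hy))
    · exact Or.inr h

end TranslateRelation

namespace ZMod

variable {k : ℕ} [NeZero k] {S : Set (ZMod k)} {R : ZMod k → ZMod k → Prop}

theorem mem_of_forall_add_one_mem (hS : ∀ i ∈ S, i + 1 ∈ S) {i : ZMod k} (hi : i ∈ S)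
    (j : ZMod k) : j ∈ S := by
  have hnat : ∀ n : ℕ, i + n ∈ S := by
    intro n
    induction n with
    | zero => simpa using hi
    | succ n ih => simpa [add_assoc] using hS _ ih
  simpa using hnat (j - i).val

theorem not_mapsTo_sub_one_sub {i j y : ZMod k} (hi : i ∈ S) (hj : j ∉ S)
    (hy : MapsTo (y - ·) S S) : ¬MapsTo (y - 1 - ·) S S := fun hy₁ =>
  hj <| mem_of_forall_add_one_mem
    (fun _ hi' => by simpa using add_sub_mem_of_mapsTo_sub hy₁ hy hi') hi j

theorem rel_of_mapsTo_sub (hR : Equivalence R)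
    (hshift : ∀ i ∈ S, ∀ i' ∈ S, ∀ j ∉ S, R (i + j) (i' + j))
    (hsucc : ∀ i ∈ S, ∀ j ∉ S, R (i + j) (i + j + 1)) {i₀ j₀ : ZMod k} (hi₀ : i₀ ∈ S)
    (hj₀ : j₀ ∉ S) {y y' : ZMod k} (hy : MapsTo (y - ·) S S) (hy' : MapsTo (y' - ·) S S) :
    R y y' := by
  have hpred : ∀ {y : ZMod k}, MapsTo (y - ·) S S → R (y - 1) y := fun hy => by
    simpa using rel_add_one_of_not_mapsTo_sub hsucc (not_mapsTo_sub_one_sub hi₀ hj₀ hy)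
  obtain ⟨i, hi, hj⟩ : ∃ i ∈ S, y - 1 - i ∉ S := by
    simpa [MapsTo] using not_mapsTo_sub_one_sub hi₀ hj₀ hy
  have hshifted : R (y - 1) (y' - 1) := by
    convert hshift i hi _ (add_sub_mem_of_mapsTo_sub hy hy' hi) _ hj using 1 <;> abel
  exact hR.trans (hR.symm (hpred hy)) (hR.trans hshifted (hpred hy'))

theorem rel_of_rel_translates (hR : Equivalence R)
    (hshift : ∀ i ∈ S, ∀ i' ∈ S, ∀ j ∉ S, R (i + j) (i' + j))
    (hsucc : ∀ i ∈ S, ∀ j ∉ S, R (i + j) (i + j + 1)) {i₀ j₀ : ZMod k} (hi₀ : i₀ ∈ S)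
    (hj₀ : j₀ ∉ S) (x z : ZMod k) : R x z := by
  have reach : ∀ x z, R x z ∨ ∃ y, MapsTo (y - ·) S S ∧ R x y := fun x z => by
    simpa using rel_add_natCast_or_exists_mapsTo_sub hR hsucc x (z - x).val
  rcases reach x z with h | ⟨y, hy, hxy⟩
  · exact h
  rcases reach z x with h | ⟨y', hy', hzy'⟩
  · exact hR.symm h
  exact hR.trans hxy <| hR.trans (rel_of_mapsTo_sub hR hshift hsucc hi₀ hj₀ hy hy') (hR.symm hzy')

end ZMod

theorem blockGraphS_HAB_adj {α : Type*} [DecidableEq α] {k : ℕ} {a b : ZMod k → α}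
    (hab : Disjoint (range a) (range b)) {X : Set α} {i j m : ZMod k} (hi : a i ∈ X)
    (hj : a j ∉ X) (hm : m = i + j ∨ m = i + j + 1) :
    (blockGraphS (HAB k a b) X).Adj (a j) (b m) :=
  ⟨hab.ne_of_mem (mem_range_self j) (mem_range_self m), a i, hi, i, j,
    fun h => hj (h ▸ hi), by rcases hm with rfl | rfl <;> simp⟩

theorem hab_connected_of_B_disjoint_general {α : Type*} [DecidableEq α] (k : ℕ) (hk : 2 ≤ k)
    (a b : ZMod k → α)
    (hab : Disjoint (Set.range a) (Set.range b)) (X : Set α)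
    (hAX : (Set.range a ∩ X).Nonempty) (hA : (Set.range a \ X).Nonempty)
    (hBX : Set.range b ∩ X = ∅) :
    ((blockGraphS (HAB k a b) X).induce
      ((Set.range a ∪ Set.range b) \ X)).Connected := by
  have : NeZero k := ⟨by omega⟩
  obtain ⟨_, ⟨i₀, rfl⟩, hi₀⟩ := hAX
  obtain ⟨_, ⟨j₀, rfl⟩, hj₀⟩ := hA
  set G := (blockGraphS (HAB k a b) X).induce ((range a ∪ range b) \ X)
  let vb (m : ZMod k) : ↥((range a ∪ range b) \ X) :=
    ⟨b m, Or.inr (mem_range_self m), fun h => hBX.subset ⟨mem_range_self m, h⟩⟩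
  have hreach : ∀ {i j m}, a i ∈ X → (hj : a j ∉ X) → (m = i + j ∨ m = i + j + 1) →
      G.Reachable ⟨a j, Or.inl (mem_range_self j), hj⟩ (vb m) :=
    fun hi hj hm => SimpleGraph.Adj.reachable (G := G) (blockGraphS_HAB_adj hab hi hj hm)
  have hb : ∀ m m', G.Reachable (vb m) (vb m') :=
    ZMod.rel_of_rel_translates (S := {i | a i ∈ X}) (G.reachable_is_equivalence.comap vb)
      (fun _ hi _ hi' _ hj => (hreach hi hj (.inl rfl)).symm.trans (hreach hi' hj (.inl rfl)))
      (fun _ hi _ hj => (hreach hi hj (.inl rfl)).symm.trans (hreach hi hj (.inr rfl)))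
      (show a i₀ ∈ X from hi₀) (show a j₀ ∉ X from hj₀)
  refine G.connected_iff_exists_forall_reachable.2 ⟨vb 0, ?_⟩
  rintro ⟨_, ⟨j, rfl⟩ | ⟨m, rfl⟩, hw⟩
  · exact (hb 0 (i₀ + j)).trans (hreach hi₀ hw (.inl rfl)).symm
  · exact hb 0 m

theorem hab_connected_of_B_disjoint {α : Type*} [DecidableEq α] (k : ℕ) (hk : 2 ≤ k)
    (a b : ZMod k → α) (ha : Function.Injective a) (hb : Function.Injective b)
    (hab : Disjoint (Set.range a) (Set.range b)) (X : Set α)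
    (hX : X ⊆ Set.range a ∪ Set.range b)
    (hAX : (Set.range a ∩ X).Nonempty) (hA : (Set.range a \ X).Nonempty)
    (hBX : Set.range b ∩ X = ∅) :
    ((blockGraphS (HAB k a b) X).induce
      ((Set.range a ∪ Set.range b) \ X)).Connected :=
  hab_connected_of_B_disjoint_general k hk a b hab X hAX hA hBX
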